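/- Let P be an orthogonal projection and U a unitary on a Hilbert space F. Then for every z in the closed unit disc, ν(P^⊥U + z U*P) ≤ 1 and ν(U*P + z P^⊥U) ≤ 1. -/

import Mathlib

/-
With `P` the orthogonal projection onto `K`, so that `1 - P` projects onto `Kᗮ`, a unit vector `h`
gives `⟪(z (1 - P) U + w U* P) h, h⟫ = z̄ ⟪(1 - P) U h, (1 - P) h⟫ + w̄ ⟪P h, P U h⟫`.
For `|z|, |w| ≤ 1` this is bounded by `‖(1 - P) U h‖ ‖(1 - P) h‖ + ‖P h‖ ‖P U h‖`, and Cauchy–Schwarz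
in `ℝ²` together with Pythagoras for `h` and `U h` bounds that by `‖h‖ ‖U h‖ = 1`.
-/

open ContinuousLinearMap

noncomputable def numRadius {F : Type*} [NormedAddCommGroup F] [InnerProductSpace ℂ F]
    (A : F →L[ℂ] F) : ℝ :=
  sSup {r : ℝ | ∃ h : F, ‖h‖ = 1 ∧ r = ‖(inner ℂ (A h) h : ℂ)‖}

theorem numRadius_le_of_forall_norm_inner_le {F : Type*} [NormedAddCommGroup F]
    [InnerProductSpace ℂ F] {A : F →L[ℂ] F} {c : ℝ} (hc : 0 ≤ c)
    (hA : ∀ h : F, ‖h‖ = 1 → ‖(inner ℂ (A h) h : ℂ)‖ ≤ c) : numRadius A ≤ c :=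
  Real.sSup_le (by rintro r ⟨h, hh, rfl⟩; exact hA h hh) hc

namespace Submodule

variable {𝕜 E : Type*} [RCLike 𝕜] [NormedAddCommGroup E] [InnerProductSpace 𝕜 E]
  (K : Submodule 𝕜 E) [K.HasOrthogonalProjection]

theorem inner_starProjection_left_eq_inner_starProjection (x y : E) :
    inner 𝕜 (K.starProjection x) y = inner 𝕜 (K.starProjection x) (K.starProjection y) := by
  rw [← K.inner_starProjection_left_eq_right,
    K.starProjection_eq_self_iff.mpr (K.starProjection_apply_mem x)]

theorem norm_starProjection_mul_add_le (x y : E) :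
    ‖K.starProjection x‖ * ‖K.starProjection y‖ + ‖Kᗮ.starProjection x‖ * ‖Kᗮ.starProjection y‖
      ≤ ‖x‖ * ‖y‖ := by
  have hx := K.norm_sq_eq_add_norm_sq_starProjection x
  have hy := K.norm_sq_eq_add_norm_sq_starProjection y
  refine le_of_sq_le_sq ?_ (by positivity)
  rw [mul_pow, hx, hy]
  nlinarith [sq_nonneg (‖K.starProjection x‖ * ‖Kᗮ.starProjection y‖
    - ‖Kᗮ.starProjection x‖ * ‖K.starProjection y‖)]

end Submodule

theorem norm_inner_smul_starProjection_comp_add_smul_adjoint_comp_le {𝕜 E : Type*} [RCLike 𝕜]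
    [NormedAddCommGroup E] [InnerProductSpace 𝕜 E] [CompleteSpace E]
    (K : Submodule 𝕜 E) [K.HasOrthogonalProjection] {U : E →L[𝕜] E} (hU : ∀ x, ‖U x‖ = ‖x‖)
    {z w : 𝕜} (hz : ‖z‖ ≤ 1) (hw : ‖w‖ ≤ 1) (h : E) :
    ‖inner 𝕜 ((z • (Kᗮ.starProjection ∘L U) + w • (adjoint U ∘L K.starProjection)) h) h‖
      ≤ ‖h‖ ^ 2 := by
  have hinner : inner 𝕜 ((z • (Kᗮ.starProjection ∘L U) + w • (adjoint U ∘L K.starProjection)) h) h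
      = starRingEnd 𝕜 z * inner 𝕜 (Kᗮ.starProjection (U h)) (Kᗮ.starProjection h)
        + starRingEnd 𝕜 w * inner 𝕜 (K.starProjection h) (K.starProjection (U h)) := by
    simp only [add_apply, smul_apply, comp_apply, inner_add_left, inner_smul_left,
      adjoint_inner_left]
    rw [Kᗮ.inner_starProjection_left_eq_inner_starProjection,
      K.inner_starProjection_left_eq_inner_starProjection]
  calc _ ≤ ‖z‖ * (‖Kᗮ.starProjection (U h)‖ * ‖Kᗮ.starProjection h‖)
        + ‖w‖ * (‖K.starProjection h‖ * ‖K.starProjection (U h)‖) := by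
        rw [hinner]
        refine (norm_add_le _ _).trans ?_
        simp only [norm_mul, RCLike.norm_conj]
        gcongr <;> exact norm_inner_le_norm _ _
    _ ≤ ‖Kᗮ.starProjection (U h)‖ * ‖Kᗮ.starProjection h‖
        + ‖K.starProjection h‖ * ‖K.starProjection (U h)‖ :=
        add_le_add (mul_le_of_le_one_left (by positivity) hz)
          (mul_le_of_le_one_left (by positivity) hw)
    _ ≤ ‖h‖ ^ 2 := by
        have := K.norm_starProjection_mul_add_le h (U h)
        rw [hU] at this
        linarith

theorem numRadius_smul_starProjection_comp_add_smul_adjoint_comp_le_one {F : Type*}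
    [NormedAddCommGroup F] [InnerProductSpace ℂ F] [CompleteSpace F]
    (K : Submodule ℂ F) [K.HasOrthogonalProjection] {U : F →L[ℂ] F} (hU : ∀ x, ‖U x‖ = ‖x‖)
    {z w : ℂ} (hz : ‖z‖ ≤ 1) (hw : ‖w‖ ≤ 1) :
    numRadius (z • (Kᗮ.starProjection ∘L U) + w • (adjoint U ∘L K.starProjection)) ≤ 1 :=
  numRadius_le_of_forall_norm_inner_le zero_le_one fun h hh ↦ by
    simpa only [hh, one_pow] using
      norm_inner_smul_starProjection_comp_add_smul_adjoint_comp_le K hU hz hw h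

theorem numRadius_le_one_on_closed_disc {F : Type*} [NormedAddCommGroup F]
    [InnerProductSpace ℂ F] [CompleteSpace F]
    (P U : F →L[ℂ] F) (hP : IsSelfAdjoint P) (hP2 : P ∘L P = P)
    (hU1 : adjoint U ∘L U = 1) :
    ∀ z : ℂ, ‖z‖ ≤ 1 →
      numRadius (((1 - P) ∘L U) + z • (adjoint U ∘L P)) ≤ 1 ∧
      numRadius ((adjoint U ∘L P) + z • ((1 - P) ∘L U)) ≤ 1 := by
  obtain ⟨K, _, rfl⟩ := isStarProjection_iff_eq_starProjection.mp ⟨hP2, hP⟩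
  have hU : ∀ x, ‖U x‖ = ‖x‖ := (norm_map_iff_adjoint_comp_self U).mpr hU1
  rw [← K.starProjection_orthogonal']
  intro z hz
  constructor
  · simpa using numRadius_smul_starProjection_comp_add_smul_adjoint_comp_le_one K hU
      norm_one.le hz
  · simpa [add_comm] using numRadius_smul_starProjection_comp_add_smul_adjoint_comp_le_one K hU
      hz norm_one.le
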